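/- Let A be a complex Banach algebra with identity and let a, b, c, d ∈ A. Suppose a and d are Hirano invertible, bc is strongly Drazin invertible with strongly Drazin inverse (bc)^D, and (bc)^D a = 0, a(bc)^π = 0 (where (bc)^π = 1 − bc(bc)^D), and bd = 0. Then the 2×2 matrix with rows (a, b) and (c, d) is Hirano invertible in M₂(A). -/

import Mathlib

/-- An element of a ring is *Hirano invertible* if there exists `x` with
`a * x = x * a`, `x = x * a * x`, and `a ^ 2 - a * x` nilpotent. -/
def IsHirano {R : Type*} [Ring R] (a : R) : Prop :=
  ∃ x : R, a * x = x * a ∧ x = x * a * x ∧ IsNilpotent (a ^ 2 - a * x)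

/-- `y` is the *strongly Drazin inverse* of `b`: `b * y = y * b`, `y = y * b * y`,
and `b - b * y` is nilpotent. -/
def IsSDrazinInv {R : Type*} [Ring R] (b y : R) : Prop :=
  b * y = y * b ∧ y = y * b * y ∧ IsNilpotent (b - b * y)

/-!
An element `a` is Hirano invertible iff `a ^ 2 - a ^ 4` is nilpotent, i.e. iff `a ^ 2` is an
idempotent plus a commuting nilpotent; the idempotent is lifted as a polynomial in `a ^ 2`.

The hypotheses force `a * a = 0`, and the matrix splits as `P + Q` with `P = !![a, b; c, 0]`,
`Q = !![0, 0; 0, d]` and `P * Q = 0`, a situation in which Hirano invertibility is additive.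
Writing `α = b * c`, the element `h = ∑ αᵏ a (α^D)ᵏ⁺¹` solves `h α - α h = a`, and conjugating
`P ^ 2 = !![α, a * b; c * a, c * b]` by `!![1, 0; c * h, 1]` makes it upper triangular. Its
diagonal entries `α` and `c * b` are idempotents modulo nilpotents, hence so is `P ^ 2`.
-/

section Nilpotent

variable {R : Type*} [Ring R]

theorem isNilpotent_mul_comm {x y : R} : IsNilpotent (x * y) ↔ IsNilpotent (y * x) := by
  have swap : ∀ x y : R, IsNilpotent (x * y) → IsNilpotent (y * x) := by
    rintro x y ⟨n, hn⟩
    exact ⟨n + 1, by rw [pow_succ, ← mul_assoc, mul_pow_mul, mul_assoc, hn, zero_mul, mul_zero]⟩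
  exact ⟨swap x y, swap y x⟩

theorem mul_add_pow_of_mul_eq_zero {x y : R} (hxy : x * y = 0) (k : ℕ) :
    x * (x + y) ^ k = x ^ (k + 1) := by
  induction k with
  | zero => simp
  | succ k ih => rw [pow_succ', ← mul_assoc, mul_add, hxy, add_zero, mul_assoc, ih, ← pow_succ']

theorem isNilpotent_add_of_mul_eq_zero {x y : R} (hxy : x * y = 0) (hx : IsNilpotent x)
    (hy : IsNilpotent y) : IsNilpotent (x + y) := by
  obtain ⟨m, hm⟩ := hx
  obtain ⟨n, hn⟩ := hy
  have key : ∀ j, (x + y) ^ (m + j) = y ^ j * (x + y) ^ m := by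
    intro j
    induction j with
    | zero => simp
    | succ j ih =>
      rw [← add_assoc, pow_succ', add_mul, mul_add_pow_of_mul_eq_zero hxy,
        pow_eq_zero_of_le (by omega) hm, zero_add, ih, ← mul_assoc, ← pow_succ']
  exact ⟨m + n, by rw [key, hn, zero_mul]⟩

theorem IsNilpotent.of_semiconjBy {g x y : R} (hg : IsUnit g) (h : SemiconjBy g x y)
    (hx : IsNilpotent x) : IsNilpotent y := by
  obtain ⟨n, hn⟩ := hx
  refine ⟨n, ?_⟩
  rw [← hg.mul_left_eq_zero, ← (h.pow_right n).eq, hn, mul_zero]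

end Nilpotent

section StronglyNilClean

variable {R : Type*} [Ring R]

theorem IsIdempotentElem.isNilpotent_add_sub_sq {e n : R} (he : IsIdempotentElem e)
    (hc : Commute e n) (hn : IsNilpotent n) : IsNilpotent (e + n - (e + n) ^ 2) := by
  have h : e + n - (e + n) ^ 2 = n * (1 - e - e - n) := by
    rw [sq, add_mul, mul_add, mul_add, he.eq, hc.eq]
    noncomm_ring
  rw [h]
  exact Commute.isNilpotent_mul_right
    ((((Commute.one_right n).sub_right hc.symm).sub_right hc.symm).sub_right (.refl n)) hn

theorem isNilpotent_add_sub_sq_of_mul_eq_zero {x y : R} (hxy : x * y = 0)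
    (hx : IsNilpotent (x - x ^ 2)) (hy : IsNilpotent (y - y ^ 2)) :
    IsNilpotent (x + y - (x + y) ^ 2) := by
  have h : x + y - (x + y) ^ 2 = (x - x ^ 2 + -(y * x)) + (y - y ^ 2) := by
    rw [sq, add_mul, mul_add, mul_add, hxy]
    noncomm_ring
  rw [h]
  refine isNilpotent_add_of_mul_eq_zero ?_ (isNilpotent_add_of_mul_eq_zero ?_ hx ?_) hy
  · rw [show x - x ^ 2 + -(y * x) = (1 - x - y) * x by noncomm_ring,
      show y - y ^ 2 = y * (1 - y) by noncomm_ring, mul_assoc, ← mul_assoc x, hxy, zero_mul,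
      mul_zero]
  · rw [show x - x ^ 2 = (1 - x) * x by noncomm_ring, mul_neg, mul_assoc, ← mul_assoc x, hxy,
      zero_mul, mul_zero, neg_zero]
  · exact ⟨2, by rw [sq, neg_mul_neg, mul_assoc, ← mul_assoc x, hxy, zero_mul, mul_zero]⟩

theorem isNilpotent_mul_sub_sq_comm {x y : R} (h : IsNilpotent (x * y - (x * y) ^ 2)) :
    IsNilpotent (y * x - (y * x) ^ 2) := by
  have hxy : x * y - (x * y) ^ 2 = (x - x * y * x) * y := by noncomm_ring
  have hyx : y * x - (y * x) ^ 2 = y * (x - x * y * x) := by noncomm_ring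
  rw [hxy] at h
  rw [hyx]
  exact isNilpotent_mul_comm.mp h

open Polynomial in
theorem X_sub_X_sq_dvd_X_sub_one_sub_one_sub_X_pow_pow {n : ℕ} (hn : n ≠ 0) :
    (X - X ^ 2 : ℤ[X]) ∣ X - (1 - (1 - X ^ n) ^ n) := by
  rw [← Ideal.mem_span_singleton, ← Ideal.Quotient.eq_zero_iff_mem]
  have hX : IsIdempotentElem (Ideal.Quotient.mk (Ideal.span {X - X ^ 2}) (X : ℤ[X])) := by
    rw [IsIdempotentElem, ← sq, ← map_pow, eq_comm, ← sub_eq_zero, ← map_sub,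
      Ideal.Quotient.eq_zero_iff_mem]
    exact Ideal.mem_span_singleton_self _
  simp only [map_sub, map_one, map_pow, hX.pow_eq hn, hX.one_sub.pow_eq hn, sub_sub_cancel,
    sub_self]

open Polynomial in
theorem exists_isIdempotentElem_isNilpotent_sub {s : R} (h : IsNilpotent (s - s ^ 2)) :
    ∃ e, IsIdempotentElem e ∧ IsNilpotent (s - e) ∧ ∀ a, Commute a s → Commute a e := by
  obtain ⟨n, hn⟩ := h
  have hn' : (s - s ^ 2) ^ (n + 1) = 0 := pow_eq_zero_of_le n.le_succ hn
  obtain ⟨q, hq⟩ := pow_dvd_pow_of_dvd (X_sub_X_sq_dvd_X_sub_one_sub_one_sub_X_pow_pow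
    n.succ_ne_zero) (n + 1)
  refine ⟨1 - (1 - s ^ (n + 1)) ^ (n + 1), isIdempotentElem_one_sub_one_sub_pow_pow s _ hn',
    ⟨n + 1, ?_⟩, fun a ha ↦ ?_⟩
  · simpa [hn'] using congrArg (aeval s) hq
  · exact (Commute.one_right a).sub_right
      (((Commute.one_right a).sub_right (ha.pow_right _)).pow_right _)

end StronglyNilClean

section Hirano

variable {R : Type*} [Ring R]

theorem IsHirano.isNilpotent_sq_sub_sq_sq {a : R} (h : IsHirano a) :
    IsNilpotent (a ^ 2 - (a ^ 2) ^ 2) := by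
  obtain ⟨x, hax, hxax, hn⟩ := h
  have he : IsIdempotentElem (a * x) := by
    rw [IsIdempotentElem, mul_assoc, ← mul_assoc x, ← hxax]
  have hea : Commute (a * x) a := by
    rw [Commute, SemiconjBy, mul_assoc, ← hax]
  have := he.isNilpotent_add_sub_sq ((hea.pow_right 2).sub_right (.refl _)) hn
  rwa [add_sub_cancel] at this

theorem isHirano_of_isNilpotent_sq_sub_sq_sq {a : R} (h : IsNilpotent (a ^ 2 - (a ^ 2) ^ 2)) :
    IsHirano a := by
  obtain ⟨e, he, hn, hcomm⟩ := exists_isIdempotentElem_isNilpotent_sub h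
  have hae : Commute a e := hcomm a ((Commute.refl a).pow_right 2)
  have hse : Commute (a ^ 2) e := hcomm _ (.refl _)
  -- `w` inverts `a ^ 2` on the range of `e` and is the identity on that of `1 - e`
  obtain ⟨w, hw⟩ : IsUnit (a ^ 2 * e + (1 - e)) := by
    rw [show a ^ 2 * e + (1 - e) = 1 + (a ^ 2 - e) * e by rw [sub_mul, he.eq]; abel]
    exact ((hse.sub_left (.refl e)).isNilpotent_mul_right hn).isUnit_one_add
  have hwe : (w : R) * e = a ^ 2 * e := by
    rw [hw, add_mul, mul_assoc, he.eq, sub_mul, one_mul, he.eq, sub_self, add_zero]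
  have haw : Commute a w := by
    rw [hw]
    exact (((Commute.refl a).pow_right 2).mul_right hae).add_right
      ((Commute.one_right a).sub_right hae)
  set u : R := ↑w⁻¹ * e
  have hau : Commute a u := haw.units_inv_right.mul_right hae
  have hu : a ^ 2 * u = e := by
    rw [← mul_assoc, ((haw.pow_left 2).units_inv_right).eq, mul_assoc, ← hwe, ← mul_assoc,
      Units.inv_mul, one_mul]
  have hax : a * (a * u) = e := by rw [← mul_assoc, ← sq, hu]
  have hxa : a * u * a = e := by rw [mul_assoc, ← hau.eq, hax]
  have hew : Commute e w := by
    rw [hw]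
    exact (hse.symm.mul_right (.refl e)).add_right ((Commute.one_right e).sub_right (.refl e))
  have heu : e * u = u := by rw [← mul_assoc, hew.units_inv_right.eq, mul_assoc, he.eq]
  refine ⟨a * u, hxa ▸ hax, ?_, by rwa [hax]⟩
  rw [hxa, ← mul_assoc e a u, ← hae.eq, mul_assoc, heu]

theorem isHirano_iff_isNilpotent_sq_sub_sq_sq {a : R} :
    IsHirano a ↔ IsNilpotent (a ^ 2 - (a ^ 2) ^ 2) :=
  ⟨IsHirano.isNilpotent_sq_sub_sq_sq, isHirano_of_isNilpotent_sq_sub_sq_sq⟩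

theorem IsHirano.add_of_mul_eq_zero {x y : R} (hx : IsHirano x) (hy : IsHirano y)
    (hxy : x * y = 0) : IsHirano (x + y) := by
  rw [isHirano_iff_isNilpotent_sq_sub_sq_sq] at hx hy ⊢
  have hsq : (x + y) ^ 2 = x ^ 2 + (y * x + y ^ 2) := by
    rw [sq, sq, sq, add_mul, mul_add, mul_add, hxy]
    abel
  have hyxy : y * x * y = 0 := by rw [mul_assoc, hxy, mul_zero]
  rw [hsq]
  refine isNilpotent_add_sub_sq_of_mul_eq_zero ?_ hx
    (isNilpotent_add_sub_sq_of_mul_eq_zero ?_ ?_ hy)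
  · rw [sq, mul_assoc, mul_add, ← mul_assoc x y, hxy, zero_mul, zero_add, sq, ← mul_assoc x y,
      hxy, zero_mul, mul_zero]
  · rw [sq, ← mul_assoc, hyxy, zero_mul]
  · exact ⟨2, by rw [sq, sq, ← mul_assoc, hyxy, zero_mul, sub_zero, ← mul_assoc, hyxy, zero_mul]⟩

end Hirano

section Drazin

variable {R : Type*} [Ring R]

theorem IsSDrazinInv.isNilpotent_sub_sq {α D : R} (hD : IsSDrazinInv α D) :
    IsNilpotent (α - α ^ 2) := by
  obtain ⟨hαD, hDαD, hn⟩ := hD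
  have he : IsIdempotentElem (α * D) := by
    rw [IsIdempotentElem, mul_assoc, ← mul_assoc D, ← hDαD]
  have hc : Commute (α * D) (α - α * D) :=
    ((Commute.refl α).mul_left hαD.symm).sub_right (.refl _)
  have := he.isNilpotent_add_sub_sq hc hn
  rwa [add_sub_cancel] at this

theorem IsSDrazinInv.exists_mul_sub_mul_eq {α D a : R} (hD : IsSDrazinInv α D)
    (hDa : D * a = 0) (haπ : a * (1 - α * D) = 0) :
    ∃ h, h * α - α * h = a ∧ h * a = 0 ∧ a * (α * h) = 0 := by
  obtain ⟨hαD, hDαD, n, hn⟩ := hD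
  have hap : a * (α * D) = a := by rwa [mul_sub, mul_one, sub_eq_zero, eq_comm] at haπ
  have hpa : α * D * a = 0 := by rw [mul_assoc, hDa, mul_zero]
  have hpα : Commute (α * D) α := (Commute.refl α).mul_left hαD.symm
  have hDp : Commute D (α * D) := by rw [Commute, SemiconjBy, ← mul_assoc, hαD]
  have haαa : ∀ k, a * (α ^ k * a) = 0 := fun k ↦ calc
    a * (α ^ k * a) = a * (α * D) * (α ^ k * a) := by rw [hap]
    _ = a * (α ^ k * (α * D * a)) := by
      rw [mul_assoc, ← mul_assoc (α * D), (hpα.pow_right k).eq, mul_assoc]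
    _ = 0 := by rw [hpa, mul_zero, mul_zero]
  -- `a` lies in the range of `1 - α * D`, where `α` acts as the nilpotent `α - α * D`
  have hαa : ∀ k, α ^ k * a = (α - α * D) ^ k * a := fun k ↦ by
    have hc : Commute α (α - α * D) := (Commute.refl α).sub_right ((Commute.refl α).mul_right hαD)
    induction k with
    | zero => simp
    | succ k ih =>
      rw [pow_succ', mul_assoc, ih, ← mul_assoc, (hc.pow_right k).eq, mul_assoc, pow_succ,
        mul_assoc, sub_mul, hpa, sub_zero]
  have hαna : α ^ n * a = 0 := by rw [hαa, hn, zero_mul]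
  have haDα : ∀ k, a * (D ^ (k + 1) * α) = a * D ^ k := fun k ↦ by
    rw [pow_succ, mul_assoc, ← hαD, (hDp.pow_left k).eq, ← mul_assoc, hap]
  set g : ℕ → R := fun k ↦ α ^ k * a * D ^ k
  have hgα : ∀ k, α ^ k * a * D ^ (k + 1) * α = g k := fun k ↦ by
    simp only [g, mul_assoc, haDα]
  have hαg : ∀ k, α * (α ^ k * a * D ^ (k + 1)) = g (k + 1) := fun k ↦ by
    simp only [g, ← mul_assoc, ← pow_succ']
  refine ⟨∑ k ∈ Finset.range n, α ^ k * a * D ^ (k + 1), ?_, ?_, ?_⟩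
  · rw [Finset.sum_mul, Finset.mul_sum, ← Finset.sum_sub_distrib]
    simp only [hgα, hαg]
    rw [Finset.sum_range_sub']
    simp [g, hαna]
  · rw [Finset.sum_mul]
    refine Finset.sum_eq_zero fun k _ ↦ ?_
    rw [mul_assoc _ (D ^ (k + 1)), pow_succ, mul_assoc (D ^ k), hDa, mul_zero, mul_zero]
  · rw [Finset.mul_sum, Finset.mul_sum]
    refine Finset.sum_eq_zero fun k _ ↦ ?_
    rw [← mul_assoc α, ← mul_assoc α, ← pow_succ', ← mul_assoc, ← mul_assoc, mul_assoc a, haαa,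
      zero_mul]

end Drazin

section Matrix

variable {R : Type*} [Ring R]

theorem Matrix.isNilpotent_upperTriangular_fin_two {p r : R} (q : R) (hp : IsNilpotent p)
    (hr : IsNilpotent r) : IsNilpotent !![p, q; 0, r] := by
  have hpow : ∀ k, ∃ q', !![p, q; 0, r] ^ k = !![p ^ k, q'; 0, r ^ k] := by
    intro k
    induction k with
    | zero => exact ⟨0, by simp [Matrix.one_fin_two]⟩
    | succ k ih =>
      obtain ⟨q', hq'⟩ := ih
      exact ⟨p ^ k * q + q' * r, by rw [pow_succ, hq']; simp [pow_succ]⟩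
  obtain ⟨m, hm⟩ := hp
  obtain ⟨n, hn⟩ := hr
  obtain ⟨q', hq'⟩ := hpow (m + n)
  refine ⟨(m + n) * 2, ?_⟩
  rw [pow_mul, hq', pow_add, hm, zero_mul, pow_add, hn, mul_zero, sq]
  ext i j; fin_cases i <;> fin_cases j <;> simp

theorem Matrix.isHirano_fin_two_of_mul_sub_mul_eq {a b c h : R} (haa : a * a = 0)
    (hbc : IsNilpotent (b * c - (b * c) ^ 2)) (hh : h * (b * c) - b * c * h = a)
    (hha : h * a = 0) (hah : a * (b * c * h) = 0) : IsHirano !![a, b; c, 0] := by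
  rw [isHirano_iff_isNilpotent_sq_sub_sq_sq]
  set T : Matrix (Fin 2) (Fin 2) R := !![b * c, a * b; 0, c * b]
  set G : Matrix (Fin 2) (Fin 2) R := !![1, 0; c * h, 1]
  have hG : IsUnit G := by
    have : G = 1 + !![0, 0; c * h, 0] := by
      ext i j; fin_cases i <;> fin_cases j <;> simp [G]
    rw [this]
    exact IsNilpotent.isUnit_one_add ⟨2, by ext i j; fin_cases i <;> fin_cases j <;> simp [sq]⟩
  have hconj : SemiconjBy G T (!![a, b; c, 0] ^ 2) := by
    have h₁ : a * (b * (c * h)) = 0 := by simpa only [mul_assoc] using hah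
    have h₂ : c * (h * (b * c)) = c * a + c * (b * (c * h)) := by
      rw [sub_eq_iff_eq_add'] at hh
      rw [hh, mul_add, mul_assoc b, add_comm]
    have h₃ : c * (h * (a * b)) = 0 := by rw [← mul_assoc h, hha, zero_mul, mul_zero]
    rw [SemiconjBy, sq]
    ext i j; fin_cases i <;> fin_cases j <;> simp [G, T, mul_assoc, haa, h₁, h₂, h₃]
  refine IsNilpotent.of_semiconjBy hG (hconj.sub_right (hconj.pow_right 2)) ?_
  have hT : T - T ^ 2 = !![b * c - (b * c) ^ 2, a * b - (b * c * (a * b) + a * b * (c * b));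
      0, c * b - (c * b) ^ 2] := by
    ext i j; fin_cases i <;> fin_cases j <;> simp [T, sq]
  rw [hT]
  exact Matrix.isNilpotent_upperTriangular_fin_two _ hbc (isNilpotent_mul_sub_sq_comm hbc)

theorem IsHirano.fin_two_lower_right {d : R} (hd : IsHirano d) : IsHirano !![0, 0; 0, d] := by
  rw [isHirano_iff_isNilpotent_sq_sub_sq_sq] at hd ⊢
  have hsq : (!![0, 0; 0, d] ^ 2 - (!![0, 0; 0, d] ^ 2) ^ 2 : Matrix (Fin 2) (Fin 2) R) =
      !![0, 0; 0, d ^ 2 - (d ^ 2) ^ 2] := by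
    ext i j; fin_cases i <;> fin_cases j <;> simp [sq]
  rw [hsq]
  exact Matrix.isNilpotent_upperTriangular_fin_two 0 IsNilpotent.zero hd

end Matrix

theorem hirano_two_by_two'_general {A : Type*} [NormedRing A]
    (a b c d bcD : A) (hd : IsHirano d)
    (hbc : IsSDrazinInv (b * c) bcD)
    (h1 : bcD * a = 0) (h2 : a * (1 - b * c * bcD) = 0) (h3 : b * d = 0) :
    IsHirano (!![a, b; c, d] : Matrix (Fin 2) (Fin 2) A) := by
  obtain ⟨h, hh, hha, hah⟩ := hbc.exists_mul_sub_mul_eq h1 h2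
  have haa : a * a = 0 := by
    rw [mul_sub, mul_one, sub_eq_zero] at h2
    nth_rewrite 1 [h2]
    rw [mul_assoc, mul_assoc (b * c), h1, mul_zero, mul_zero]
  have hsplit : !![a, b; c, d] = !![a, b; c, 0] + !![0, 0; 0, d] := by
    ext i j; fin_cases i <;> fin_cases j <;> simp
  rw [hsplit]
  have hP := Matrix.isHirano_fin_two_of_mul_sub_mul_eq haa hbc.isNilpotent_sub_sq hh hha hah
  refine hP.add_of_mul_eq_zero hd.fin_two_lower_right ?_
  ext i j; fin_cases i <;> fin_cases j <;> simp [h3]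

/-- If `a, d` are Hirano invertible, `b * c` is strongly Drazin invertible with
strong Drazin inverse `bcD`, `bcD * a = 0`, `a * (bc)π = 0` and `b * d = 0`,
then `!![a, b; c, d]` is Hirano invertible in `M₂(A)`. -/
theorem hirano_two_by_two' {A : Type*} [NormedRing A] [NormedAlgebra ℂ A]
    [CompleteSpace A] (a b c d bcD : A) (ha : IsHirano a) (hd : IsHirano d)
    (hbc : IsSDrazinInv (b * c) bcD)
    (h1 : bcD * a = 0) (h2 : a * (1 - b * c * bcD) = 0) (h3 : b * d = 0) :
    IsHirano (!![a, b; c, d] : Matrix (Fin 2) (Fin 2) A) :=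
  hirano_two_by_two'_general a b c d bcD hd hbc h1 h2 h3
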